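/- The derivative of the realization probability p_b with respect to p, evaluated at p = 0, vanishes unless b is the all-zero string or b contains exactly one maximal run of consecutive 1s; for the all-zero string it equals -[m(1-κ)+1], and for a string consisting of i zeros, then ℓ ≥ 1 consecutive ones, then k = m+1-i-ℓ zeros, it equals (1-κ)^{2 - δ_{i,0} - δ_{k,0}} · κ^{ℓ-1}. -/

import Mathlib

def T (p κ : ℝ) : Matrix (Fin 2) (Fin 2) ℝ :=
  !![κ + (1-κ)*(1-p), (1-κ)*(1-p); (1-κ)*p, κ + (1-κ)*p]

def pb (p κ : ℝ) (m : ℕ) (b : Fin (m+1) → Fin 2) : ℝ :=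
  (if b 0 = 0 then 1 - p else p) * ∏ t : Fin m, T p κ (b t.succ) (b t.castSucc)

/-- The bitstring `0^i 1^ℓ 0^(m+1-i-ℓ)`: a single run of `ℓ` ones starting at `i`. -/
def run (m i ℓ : ℕ) : Fin (m+1) → Fin 2 :=
  fun t => if i ≤ (t : ℕ) ∧ (t : ℕ) < i + ℓ then 1 else 0

/-!
Every factor of `p_b` is affine in `p`, so the derivative at `0` is `∑ⱼ cⱼ ∏_{l ≠ j} aₗ`, where
`aₗ` is the value at `p = 0` of the `l`-th factor and `cⱼ` the slope of the `j`-th. At `p = 0`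
both `T₁₀` and the initial factor `p` vanish, so `aₗ = 0` wherever a run of ones starts.
Two runs therefore kill every term; a single run starting at `i` leaves only the term `j = i`,
whose other factors are `κ` inside the run, `1 - κ` at the zero ending it and `1` elsewhere; for
the zero string all `aₗ = 1` and the derivative is the sum of the slopes.
-/

open Finset

section ProductDerivative

variable {ι R : Type*} [CommSemiring R] [DecidableEq ι] {s : Finset ι} {a c : ι → R} {i j : ι}

lemma sum_prod_erase_mul_eq_of_eq_zero (hi : i ∈ s) (ha : a i = 0) :
    ∑ l ∈ s, (∏ n ∈ s.erase l, a n) * c l = (∏ n ∈ s.erase i, a n) * c i :=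
  sum_eq_single_of_mem i hi fun l hl hli => by
    rw [prod_eq_zero (mem_erase.2 ⟨Ne.symm hli, hi⟩) ha, zero_mul]

lemma sum_prod_erase_mul_eq_zero (hi : i ∈ s) (hj : j ∈ s) (hij : i ≠ j)
    (hai : a i = 0) (haj : a j = 0) : ∑ l ∈ s, (∏ n ∈ s.erase l, a n) * c l = 0 := by
  rw [sum_prod_erase_mul_eq_of_eq_zero hi hai, prod_eq_zero (mem_erase.2 ⟨hij.symm, hj⟩) haj,
    zero_mul]

end ProductDerivative

lemma T_apply_eq_T_zero_add (p κ : ℝ) (x y : Fin 2) :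
    T p κ x y = T 0 κ x y + p * ((1 - κ) * if x = 0 then -1 else 1) := by
  fin_cases x <;> fin_cases y <;> simp [T] <;> ring

lemma hasDerivAt_T (p κ : ℝ) (x y : Fin 2) :
    HasDerivAt (fun q => T q κ x y) ((1 - κ) * if x = 0 then -1 else 1) p := by
  have hT : (fun q => T q κ x y) = fun q => T 0 κ x y + q * ((1 - κ) * if x = 0 then -1 else 1) :=
    funext fun q => T_apply_eq_T_zero_add q κ x y
  rw [hT]
  exact (((hasDerivAt_id' p).mul_const _).const_add _).congr_deriv (one_mul _)

/-- The factors of `pb`, with the bit string read through a sequence `β : ℕ → Fin 2` extending it,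
so that they can be indexed by `range (m + 1)`. -/
def pbFactor (κ p : ℝ) (β : ℕ → Fin 2) : ℕ → ℝ
  | 0 => if β 0 = 0 then 1 - p else p
  | n + 1 => T p κ (β (n + 1)) (β n)

def pbFactorDeriv (κ : ℝ) (β : ℕ → Fin 2) : ℕ → ℝ
  | 0 => if β 0 = 0 then -1 else 1
  | n + 1 => (1 - κ) * if β (n + 1) = 0 then -1 else 1

lemma pb_eq_prod_pbFactor (p κ : ℝ) {m : ℕ} {b : Fin (m + 1) → Fin 2} {β : ℕ → Fin 2}
    (hβ : ∀ j : Fin (m + 1), b j = β j) :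
    pb p κ m b = ∏ n ∈ range (m + 1), pbFactor κ p β n := by
  rw [← Fin.prod_univ_eq_prod_range, Fin.prod_univ_succ, pb]
  simp [pbFactor, hβ]

lemma hasDerivAt_pbFactor (p κ : ℝ) (β : ℕ → Fin 2) (n : ℕ) :
    HasDerivAt (fun q => pbFactor κ q β n) (pbFactorDeriv κ β n) p := by
  cases n with
  | zero =>
    by_cases h : β 0 = 0 <;> simp only [pbFactor, pbFactorDeriv, h, if_true, if_false]
    · simpa using (hasDerivAt_id p).const_sub 1
    · exact hasDerivAt_id p
  | succ n => exact hasDerivAt_T p κ _ _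

lemma hasDerivAt_pb (κ : ℝ) {m : ℕ} {b : Fin (m + 1) → Fin 2} {β : ℕ → Fin 2}
    (hβ : ∀ j : Fin (m + 1), b j = β j) :
    HasDerivAt (fun p => pb p κ m b)
      (∑ n ∈ range (m + 1),
        (∏ l ∈ (range (m + 1)).erase n, pbFactor κ 0 β l) * pbFactorDeriv κ β n) 0 := by
  simp_rw [pb_eq_prod_pbFactor _ κ hβ]
  exact HasDerivAt.fun_finsetProd fun n _ => hasDerivAt_pbFactor 0 κ β n

def IsRise (β : ℕ → Fin 2) : ℕ → Prop
  | 0 => β 0 = 1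
  | n + 1 => β (n + 1) = 1 ∧ β n = 0

lemma pbFactor_zero_eq_zero_of_isRise (κ : ℝ) {β : ℕ → Fin 2} {n : ℕ} (h : IsRise β n) :
    pbFactor κ 0 β n = 0 := by
  cases n <;> simp_all [IsRise, pbFactor, T]

def runSeq (i ℓ : ℕ) (n : ℕ) : Fin 2 := if i ≤ n ∧ n < i + ℓ then 1 else 0

lemma isRise_runSeq {i ℓ : ℕ} (hℓ : 1 ≤ ℓ) : IsRise (runSeq i ℓ) i := by
  cases i <;> simp [IsRise, runSeq] <;> omega

lemma pbFactorDeriv_runSeq (κ : ℝ) {i ℓ : ℕ} (hℓ : 1 ≤ ℓ) :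
    pbFactorDeriv κ (runSeq i ℓ) i = if i = 0 then 1 else 1 - κ := by
  cases i <;> simp [pbFactorDeriv, runSeq] <;> omega

lemma pbFactor_runSeq {κ : ℝ} {i ℓ n : ℕ} (hℓ : 1 ≤ ℓ) (hn : n ≠ i) :
    pbFactor κ 0 (runSeq i ℓ) n =
      (if n ∈ Ioo i (i + ℓ) then κ else 1) * (if n = i + ℓ then 1 - κ else 1) := by
  rcases n with _ | n <;> simp only [pbFactor, runSeq, mem_Ioo] <;> split_ifs <;> simp [T] <;> omega

lemma prod_erase_pbFactor_runSeq (κ : ℝ) {m i ℓ k : ℕ} (hℓ : 1 ≤ ℓ) (hm : i + ℓ + k = m + 1) :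
    ∏ n ∈ (range (m + 1)).erase i, pbFactor κ 0 (runSeq i ℓ) n =
      κ ^ (ℓ - 1) * (if k = 0 then 1 else 1 - κ) := by
  rw [prod_congr rfl fun n hn => pbFactor_runSeq hℓ (ne_of_mem_erase hn),
    prod_erase _ (by simp; omega), prod_mul_distrib, prod_ite_mem, prod_ite_eq', prod_const,
    inter_eq_right.2 fun n hn => mem_range.2 (by grind), Nat.card_Ioo]
  congr 1
  · congr 1; omega
  · grind

lemma exists_eq_one_iff_of_isRise_eq (β : ℕ → Fin 2) (i : ℕ) :
    ∀ N, (∀ n < N, IsRise β n → n = i) → ∃ e ≤ N, ∀ n < N, (β n = 1 ↔ i ≤ n ∧ n < e)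
  | 0, _ => ⟨0, le_rfl, by simp⟩
  | N + 1, hrise => by
    obtain ⟨e, heN, he⟩ := exists_eq_one_iff_of_isRise_eq β i N fun n hn => hrise n (by omega)
    by_cases hN : β N = 1
    -- a one at `N` is either the unique rise `i` or prolongs a run that reached `N - 1`
    · have hiN : i ≤ N ∧ ∀ n < N, i ≤ n ∧ n < e ↔ i ≤ n ∧ n < N + 1 := by
        by_cases hr : IsRise β N
        · have := hrise N (by omega) hr
          exact ⟨by omega, fun n hn => by omega⟩
        · obtain _ | N' := N
          · exact absurd hN hr
          · have : β N' = 1 := by simp only [IsRise, hN, true_and] at hr; omega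
            have := (he N' (by omega)).1 this
            exact ⟨by omega, fun n hn => by omega⟩
      refine ⟨N + 1, le_rfl, fun n hn => ?_⟩
      rcases Nat.lt_succ_iff_lt_or_eq.1 hn with hn | rfl
      · rw [he n hn, hiN.2 n hn]
      · simp [hN, hiN.1]
    · refine ⟨e, by omega, fun n hn => ?_⟩
      rcases Nat.lt_succ_iff_lt_or_eq.1 hn with hn | rfl
      · exact he n hn
      · simp only [hN, false_iff]; omega

def bitSeq {m : ℕ} (b : Fin (m + 1) → Fin 2) (n : ℕ) : Fin 2 :=
  if h : n < m + 1 then b ⟨n, h⟩ else 0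

lemma bitSeq_val {m : ℕ} (b : Fin (m + 1) → Fin 2) (j : Fin (m + 1)) : b j = bitSeq b j := by
  simp [bitSeq, j.isLt]

lemma exists_isRise_ne {m : ℕ} {b : Fin (m + 1) → Fin 2} (hb0 : b ≠ fun _ => 0)
    (hrun : ¬ ∃ i ℓ k : ℕ, 1 ≤ ℓ ∧ i + ℓ + k = m + 1 ∧ b = run m i ℓ) :
    ∃ s < m + 1, ∃ t < m + 1, s ≠ t ∧ IsRise (bitSeq b) s ∧ IsRise (bitSeq b) t := by
  by_contra! h
  obtain ⟨i, hi⟩ : ∃ i, ∀ n < m + 1, IsRise (bitSeq b) n → n = i := by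
    by_cases hex : ∃ s < m + 1, IsRise (bitSeq b) s
    · obtain ⟨s, hs, hrs⟩ := hex
      exact ⟨s, fun t ht hrt => by_contra fun hts => h t ht s hs hts hrt hrs⟩
    · push Not at hex
      exact ⟨0, fun n hn hr => absurd hr (hex n hn)⟩
  obtain ⟨e, hem, he⟩ := exists_eq_one_iff_of_isRise_eq _ i (m + 1) hi
  have hb : ∀ j, b j = run m i (e - i) j := fun j => by
    have := he j j.isLt
    rw [← bitSeq_val] at this
    simp only [run]
    split_ifs <;> omega
  by_cases hie : i < e
  · exact hrun ⟨i, e - i, m + 1 - e, by omega, by omega, funext hb⟩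
  · exact hb0 (funext fun j => by rw [hb]; simp only [run]; split_ifs <;> omega)

theorem stmt_9_general (κ : ℝ) (m : ℕ) :
    (deriv (fun p => pb p κ m (fun _ => 0)) 0 = -((m : ℝ) * (1 - κ) + 1)) ∧
    (∀ i ℓ k : ℕ, 1 ≤ ℓ → i + ℓ + k = m + 1 →
      deriv (fun p => pb p κ m (run m i ℓ)) 0 =
        (1 - κ) ^ (2 - (if i = 0 then 1 else 0) - (if k = 0 then 1 else 0)) * κ ^ (ℓ - 1)) ∧
    (∀ b : Fin (m+1) → Fin 2, b ≠ (fun _ => 0) →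
      (¬ ∃ i ℓ k : ℕ, 1 ≤ ℓ ∧ i + ℓ + k = m + 1 ∧ b = run m i ℓ) →
      deriv (fun p => pb p κ m b) 0 = 0) := by
  refine ⟨?_, fun i ℓ k hℓ hm => ?_, fun b hb0 hrun => ?_⟩
  · have hfactor : ∀ n, pbFactor κ 0 (fun _ => 0) n = 1 := by
      rintro (_ | n) <;> simp [pbFactor, T]
    rw [(hasDerivAt_pb κ (β := fun _ => 0) fun _ => rfl).deriv]
    simp [hfactor, sum_range_succ', pbFactorDeriv]
    ring
  · rw [(hasDerivAt_pb κ (b := run m i ℓ) (β := runSeq i ℓ) fun _ => rfl).deriv,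
      sum_prod_erase_mul_eq_of_eq_zero (mem_range.2 (by omega))
        (pbFactor_zero_eq_zero_of_isRise κ (isRise_runSeq hℓ)),
      prod_erase_pbFactor_runSeq κ hℓ hm, pbFactorDeriv_runSeq κ hℓ]
    split_ifs <;> ring
  · obtain ⟨s, hs, t, ht, hst, hrs, hrt⟩ := exists_isRise_ne hb0 hrun
    rw [(hasDerivAt_pb κ (bitSeq_val b)).deriv]
    exact sum_prod_erase_mul_eq_zero (mem_range.2 hs) (mem_range.2 ht) hst
      (pbFactor_zero_eq_zero_of_isRise κ hrs) (pbFactor_zero_eq_zero_of_isRise κ hrt)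

theorem stmt_9 (κ : ℝ) (hκ : κ ∈ Set.Icc (0:ℝ) 1) (m : ℕ) :
    (deriv (fun p => pb p κ m (fun _ => 0)) 0 = -((m : ℝ) * (1 - κ) + 1)) ∧
    (∀ i ℓ k : ℕ, 1 ≤ ℓ → i + ℓ + k = m + 1 →
      deriv (fun p => pb p κ m (run m i ℓ)) 0 =
        (1 - κ) ^ (2 - (if i = 0 then 1 else 0) - (if k = 0 then 1 else 0)) * κ ^ (ℓ - 1)) ∧
    (∀ b : Fin (m+1) → Fin 2, b ≠ (fun _ => 0) →
      (¬ ∃ i ℓ k : ℕ, 1 ≤ ℓ ∧ i + ℓ + k = m + 1 ∧ b = run m i ℓ) →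
      deriv (fun p => pb p κ m b) 0 = 0) :=
  stmt_9_general κ m
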